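/- Let (A,M) be a local integral domain that is not a valuation ring, with maximal ideal M. Then the trivial ring extension R := A ⋉ (A/M), where A/M is viewed as an A-module, is a total ring of quotients (every element of R is either a unit or a zero-divisor) which is not a Gaussian ring. -/

import Mathlib

/-- The content ideal `c(f)` of a polynomial: the ideal generated by its coefficients. -/
def contentIdeal {R : Type*} [CommRing R] (f : Polynomial R) : Ideal R :=
  Ideal.span (Set.range f.coeff)

/-- A polynomial `f` is Gaussian if `c(f*g) = c(f)*c(g)` for every polynomial `g`. -/
def IsGaussianPoly {R : Type*} [CommRing R] (f : Polynomial R) : Prop :=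
  ∀ g : Polynomial R, contentIdeal (f * g) = contentIdeal f * contentIdeal g

/-- A commutative ring is Gaussian if every polynomial over it is Gaussian. -/
def IsGaussianRing (R : Type*) [CommRing R] : Prop :=
  ∀ f : Polynomial R, IsGaussianPoly f

/-- A commutative ring is arithmetical if every finitely generated ideal is locally
principal: its extension to the localization at each maximal ideal is principal. -/
def IsArithmeticalRing (R : Type*) [CommRing R] : Prop :=
  ∀ I : Ideal R, I.FG → ∀ P : Ideal R, ∀ hP : P.IsMaximal,
    haveI := hP.isPrime
    (I.map (algebraMap R (Localization P.primeCompl))).IsPrincipal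

/-- A commutative ring is a Prüfer ring if every finitely generated ideal containing a
non-zero-divisor is invertible as a fractional ideal. -/
def IsPruferRing (R : Type*) [CommRing R] : Prop :=
  ∀ I : Ideal R, I.FG → (∃ r ∈ I, r ∈ nonZeroDivisors R) →
    IsUnit (I : FractionalIdeal (nonZeroDivisors R) (FractionRing R))

/-- An integral domain is a Prüfer domain if every nonzero finitely generated ideal is
invertible as a fractional ideal. -/
def IsPruferDomain (A : Type*) [CommRing A] [IsDomain A] : Prop :=
  ∀ I : Ideal A, I.FG → I ≠ ⊥ →
    IsUnit (I : FractionalIdeal (nonZeroDivisors A) (FractionRing A))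

/-- A commutative ring is a total ring of quotients if each of its elements is
either a unit or a zero-divisor. -/
def IsTotalRingOfQuotients (R : Type*) [CommRing R] : Prop :=
  ∀ r : R, IsUnit r ∨ r ∉ nonZeroDivisors R

/-- A commutative ring is pseudo-arithmetical if every Gaussian polynomial over it has
locally principal content ideal. -/
def IsPseudoArithmetical (R : Type*) [CommRing R] : Prop :=
  ∀ f : Polynomial R, IsGaussianPoly f → ∀ P : Ideal R, ∀ hP : P.IsMaximal,
    haveI := hP.isPrime
    ((contentIdeal f).map (algebraMap R (Localization P.primeCompl))).IsPrincipal

/-- The ideal `0 ⋉ E` of the trivial ring extension `A ⋉ E`: the ideal of elements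
with zero first component, i.e. the kernel of the projection `A ⋉ E → A`. -/
def zeroIdealTrivSqZeroExt (A E : Type*) [CommRing A] [AddCommGroup E] [Module A E]
    [Module Aᵐᵒᵖ E] [IsCentralScalar A E] : Ideal (TrivSqZeroExt A E) :=
  RingHom.ker (TrivSqZeroExt.fstHom A A E).toRingHom

/-!
An element of `A ⋉ (A/M)` is a unit as soon as its first component is; otherwise that component
lies in `M` and the element is annihilated by `(0, 1)`. For the second half, Gaussianity passes to
the quotient `A ⋉ (A/M) → A`, and a local Gaussian domain is a valuation ring: for `a, b ≠ 0`,
Gaussianity of `(aX + b)(aX - b)` gives `ab = r a² - t b²`, and two more applications of the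
Gaussian property show that `r a / b` and `-t b / a` lie in `A`. They sum to `1`, so one of them is
a unit, whence `a ∣ b` or `b ∣ a`.
-/

open Polynomial hiding contentIdeal

section Content

variable {R : Type*} [CommRing R]

theorem contentIdeal_eq_polynomial_contentIdeal (f : R[X]) :
    contentIdeal f = f.contentIdeal := by
  refine le_antisymm (Ideal.span_le.mpr ?_) (Ideal.span_mono ?_)
  · rintro _ ⟨n, rfl⟩
    exact f.coeff_mem_contentIdeal n
  · intro c hc
    obtain ⟨n, -, rfl⟩ := mem_coeffs_iff.mp hc
    exact ⟨n, rfl⟩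

theorem contentIdeal_le_iff {f : R[X]} {I : Ideal R} :
    contentIdeal f ≤ I ↔ ∀ n, f.coeff n ∈ I := by
  simp only [contentIdeal, Ideal.span_le, Set.range_subset_iff, SetLike.mem_coe]

theorem contentIdeal_map {S : Type*} [CommRing S] (φ : R →+* S) (f : R[X]) :
    contentIdeal (f.map φ) = (contentIdeal f).map φ := by
  simp only [contentIdeal_eq_polynomial_contentIdeal, contentIdeal_map_eq_map_contentIdeal]

theorem contentIdeal_quadratic_le_span (p q r : R) :
    contentIdeal (C p * X ^ 2 + C q * X + C r) ≤ Ideal.span {p, q, r} := by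
  refine contentIdeal_le_iff.mpr fun n => ?_
  match n with
  | 0 => simpa using Ideal.subset_span (by simp)
  | 1 => simpa using Ideal.subset_span (by simp)
  | 2 => simpa using Ideal.subset_span (by simp)
  | n + 3 => simp

end Content

namespace IsGaussianRing

variable {R : Type*} [CommRing R]

theorem of_surjective {S : Type*} [CommRing S] (hR : IsGaussianRing R) (φ : R →+* S)
    (hφ : Function.Surjective φ) : IsGaussianRing S := by
  intro f g
  obtain ⟨f, rfl⟩ := map_surjective φ hφ f
  obtain ⟨g, rfl⟩ := map_surjective φ hφ g
  rw [← Polynomial.map_mul, contentIdeal_map, contentIdeal_map, contentIdeal_map, hR f g,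
    Ideal.map_mul]

/-- Gaussianity of `(x X + y) (z X + w)`, applied to the element `y z` of `c(f) c(g)`. -/
theorem exists_mul_eq (hR : IsGaussianRing R) (x y z w : R) :
    ∃ r s t, y * z = r * (x * z) + s * (x * w + y * z) + t * (y * w) := by
  have hyz : y * z ∈ contentIdeal ((C x * X + C y) * (C z * X + C w)) := by
    rw [hR, contentIdeal_eq_polynomial_contentIdeal, contentIdeal_eq_polynomial_contentIdeal]
    refine Ideal.mul_mem_mul ?_ ?_
    · convert coeff_mem_contentIdeal (C x * X + C y) 0
      simp
    · convert coeff_mem_contentIdeal (C z * X + C w) 1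
      simp
  have hprod : (C x * X + C y) * (C z * X + C w)
      = C (x * z) * X ^ 2 + C (x * w + y * z) * X + C (y * w) := by
    simp only [C_mul, C_add]; ring
  rw [hprod] at hyz
  obtain ⟨r, u, hu, hru⟩ := Ideal.mem_span_insert.mp (contentIdeal_quadratic_le_span _ _ _ hyz)
  obtain ⟨s, t, rfl⟩ := Ideal.mem_span_pair.mp hu
  exact ⟨r, s, t, by linear_combination hru⟩

/-- Read with `t = c / b`: if `t ^ 2 - t` lies in `R`, so does `t`. -/
theorem sq_dvd_mul_of_sq_dvd_mul_sub (hR : IsGaussianRing R) {b c : R}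
    (h : b ^ 2 ∣ c * (c - b)) : b ^ 2 ∣ c * b := by
  obtain ⟨k, hk⟩ := h
  obtain ⟨r, s, t, hrst⟩ := hR.exists_mul_eq b (-c) b (c - b)
  exact ⟨s - r + t * k, by linear_combination -hrst + t * hk⟩

theorem dvd_of_sq_dvd_mul_sub [IsDomain R] (hR : IsGaussianRing R) {b c : R} (hb : b ≠ 0)
    (h : b ^ 2 ∣ c * (c - b)) : b ∣ c := by
  obtain ⟨k, hk⟩ := hR.sq_dvd_mul_of_sq_dvd_mul_sub h
  exact ⟨k, mul_right_cancel₀ hb (by linear_combination hk)⟩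

theorem valuationRing [IsDomain R] [IsLocalRing R] (hR : IsGaussianRing R) :
    ValuationRing R := by
  refine ValuationRing.iff_dvd_total.mpr ⟨fun a b => ?_⟩
  rcases eq_or_ne a 0 with rfl | ha
  · exact Or.inr (dvd_zero b)
  rcases eq_or_ne b 0 with rfl | hb
  · exact Or.inl (dvd_zero a)
  obtain ⟨r, s, t, hrst⟩ := hR.exists_mul_eq a b a (-b)
  have hab : a * b = r * a ^ 2 - t * b ^ 2 := by linear_combination hrst
  obtain ⟨v, hv⟩ : b ∣ r * a :=
    hR.dvd_of_sq_dvd_mul_sub hb ⟨r * t, by linear_combination -r * hab⟩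
  obtain ⟨w, hw⟩ : a ∣ -(t * b) :=
    hR.dvd_of_sq_dvd_mul_sub ha ⟨t * r, by linear_combination t * hab⟩
  have hvw : v + w = 1 :=
    mul_left_cancel₀ (mul_ne_zero ha hb) (by linear_combination -a * hv - b * hw - hab)
  rcases IsLocalRing.isUnit_or_isUnit_of_add_one hvw with hv' | hw'
  · exact Or.inl (hv'.dvd_mul_right.mp (hv ▸ dvd_mul_left a r))
  · exact Or.inr (hw'.dvd_mul_right.mp (hw ▸ dvd_neg.mpr (dvd_mul_left b t)))

end IsGaussianRing

namespace TrivSqZeroExt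

variable {A E : Type*} [CommRing A] [AddCommGroup E] [Module A E] [Module Aᵐᵒᵖ E]
  [IsCentralScalar A E]

theorem inr_mul_eq_zero_of_fst_smul_eq_zero {r : TrivSqZeroExt A E} {e : E}
    (h : r.fst • e = 0) : inr e * r = 0 := by
  ext <;> simp [h]

theorem _root_.IsGaussianRing.of_trivSqZeroExt (h : IsGaussianRing (TrivSqZeroExt A E)) :
    IsGaussianRing A :=
  h.of_surjective (fstHom A A E).toRingHom fst_surjective

theorem isTotalRingOfQuotients [IsLocalRing A] {e : E} (he : e ≠ 0)
    (hMe : ∀ m ∈ IsLocalRing.maximalIdeal A, m • e = 0) :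
    IsTotalRingOfQuotients (TrivSqZeroExt A E) := by
  intro r
  by_cases hr : IsUnit r.fst
  · exact Or.inl (isUnit_iff_isUnit_fst.mpr hr)
  · refine Or.inr fun hr' => he ?_
    have hzero := mem_nonZeroDivisors_iff_right.mp hr' _
      (inr_mul_eq_zero_of_fst_smul_eq_zero (hMe _ ((IsLocalRing.mem_maximalIdeal _).mpr hr)))
    simpa using congrArg snd hzero

end TrivSqZeroExt

/-- Let `(A,M)` be a local integral domain which is not a valuation ring. Then
`R := A ⋉ (A/M)` is a total ring of quotients which is not a Gaussian ring. -/
theorem trivSqZeroExt_residue_not_gaussian (A : Type*) [CommRing A] [IsDomain A]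
    [IsLocalRing A] (hnv : ¬ ValuationRing A) :
    IsTotalRingOfQuotients (TrivSqZeroExt A (A ⧸ IsLocalRing.maximalIdeal A)) ∧
      ¬ IsGaussianRing (TrivSqZeroExt A (A ⧸ IsLocalRing.maximalIdeal A)) := by
  refine ⟨TrivSqZeroExt.isTotalRingOfQuotients one_ne_zero fun m hm => ?_, fun hG => ?_⟩
  · rwa [Algebra.smul_def, mul_one, Ideal.Quotient.algebraMap_eq, Ideal.Quotient.eq_zero_iff_mem]
  · exact hnv (IsGaussianRing.of_trivSqZeroExt hG).valuationRing
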